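/- arXiv:2006.02529 — 4 statements merged into one kernel-verified Lean document; each statement's English description precedes it below -/
import Mathlib

section
/- Let r₀ ∈ (0, ∞] and let u : [0, r₀) → ℝ be a smooth function such that 1 + 2u'(t)t > 0 for all t ∈ [0, r₀). Then there exists a twice differentiable function Φ, defined on the image of [0, r₀) under the map t ↦ e^{2u(t)}t, such that Φ' > 0 everywhere on its domain and Φ''(e^{2u(t)}t)·e^{2u(t)}·(1 + 2u'(t)t)² + 2Φ'(e^{2u(t)}t)·(u''(t)t + u'(t)) = 0 for all t ∈ (0, r₀). -/
open Set Filter MeasureTheory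
open scoped ContDiff Topology

/-- For a smooth function `u : [0, r₀) → ℝ` with `1 + 2 u'(t) t > 0` on
`[0, r₀)`, there is a twice differentiable function `Φ`, defined on the image of `[0, r₀)`
under `t ↦ exp (2 u t) * t`, with `Φ' > 0` there, satisfying
`Φ''(e^{2u(t)}t) e^{2u(t)} (1 + 2u'(t)t)² + 2 Φ'(e^{2u(t)}t) (u''(t)t + u'(t)) = 0`
for all `t ∈ (0, r₀)`. -/
theorem stmt1 (I : Set ℝ)
    (hI : (∃ r₀ : ℝ, 0 < r₀ ∧ I = Set.Ico 0 r₀) ∨ I = Set.Ici 0)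
    (u : ℝ → ℝ) (hu : ContDiffOn ℝ (⊤ : ℕ∞) u I)
    (hpos : ∀ t ∈ I, 0 < 1 + 2 * deriv u t * t) :
    ∃ Φ : ℝ → ℝ,
      (∀ s ∈ (fun t => Real.exp (2 * u t) * t) '' I,
        DifferentiableAt ℝ Φ s ∧ DifferentiableAt ℝ (deriv Φ) s ∧ 0 < deriv Φ s) ∧
      (∀ t ∈ I, t ≠ 0 →
        deriv (deriv Φ) (Real.exp (2 * u t) * t) * Real.exp (2 * u t) *
            (1 + 2 * deriv u t * t) ^ 2 +
          2 * deriv Φ (Real.exp (2 * u t) * t) * (deriv (deriv u) t * t + deriv u t) = 0) := by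
  classical
  -- basic structural facts about `I`
  have h0I : (0:ℝ) ∈ I := by
    rcases hI with ⟨r₀, hr₀, rfl⟩ | rfl
    · exact ⟨le_refl 0, hr₀⟩
    · exact self_mem_Ici
  have hIsub : I ⊆ Ici 0 := by
    rcases hI with ⟨r₀, hr₀, rfl⟩ | rfl
    · exact Ico_subset_Ici_self
    · exact subset_rfl
  have hconv : Convex ℝ I := by
    rcases hI with ⟨r₀, hr₀, rfl⟩ | rfl
    · exact convex_Ico 0 r₀
    · exact convex_Ici 0
  have hint : interior I = I \ {0} := by
    rcases hI with ⟨r₀, hr₀, rfl⟩ | rfl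
    · rw [interior_Ico, ← Ico_diff_left]
    · rw [interior_Ici, ← Ici_sdiff_left]
  have hup : ∀ t ∈ I, ∃ t' ∈ I, t < t' := by
    rcases hI with ⟨r₀, hr₀, rfl⟩ | rfl
    · rintro t ⟨ht0, htr⟩
      exact ⟨(t + r₀) / 2, ⟨by linarith, by linarith⟩, by linarith⟩
    · intro t ht
      exact ⟨t + 1, le_trans ht (by linarith : t ≤ t + 1), by linarith⟩
  have huniq : UniqueDiffOn ℝ I := by
    rcases hI with ⟨r₀, hr₀, rfl⟩ | rfl
    · exact uniqueDiffOn_Ico 0 r₀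
    · exact uniqueDiffOn_Ici 0
  have hIcc : ∀ x ∈ I, ∀ y ∈ I, Icc x y ⊆ I := fun x hx y hy => hconv.ordConnected.out hx hy
  have hmemJ : ∀ t ∈ I, t ≠ 0 → I ∈ 𝓝 t := fun t ht hne =>
    mem_interior_iff_mem_nhds.mp (by rw [hint]; exact ⟨ht, hne⟩)
  -- derivatives of u
  have huinf : ContDiffOn ℝ ∞ u I := hu.of_le (by simp)
  have hu' : ∀ t, I ∈ 𝓝 t → HasDerivAt u (deriv u t) t := fun t h =>
    ((huinf.contDiffAt h).differentiableAt (by simp)).hasDerivAt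
  have hduO : ContDiffOn ℝ ∞ (deriv u) (interior I) :=
    (huinf.mono interior_subset).deriv_of_isOpen isOpen_interior (le_of_eq (by rfl))
  have hu'' : ∀ t ∈ I, t ≠ 0 → HasDerivAt (deriv u) (deriv (deriv u) t) t := by
    intro t ht hne
    have htJ : t ∈ interior I := by rw [hint]; exact ⟨ht, hne⟩
    exact ((hduO.contDiffAt (isOpen_interior.mem_nhds htJ)).differentiableAt
      (by simp)).hasDerivAt
  have hdW : ContinuousOn (derivWithin u I) I := huinf.continuousOn_derivWithin huniq (by exact_mod_cast le_top)
  have hdWeq : ∀ t ∈ I, t ≠ 0 → derivWithin u I t = deriv u t := fun t ht hne =>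
    derivWithin_of_mem_nhds (hmemJ t ht hne)
  -- the map A
  set A : ℝ → ℝ := fun t => Real.exp (2 * u t) * t with hA
  have hA0 : A 0 = 0 := by simp [hA]
  have hAcont : ContinuousOn A I :=
    (Real.continuous_exp.comp_continuousOn (continuousOn_const.mul huinf.continuousOn)).mul
      continuousOn_id
  have hAder : ∀ t, I ∈ 𝓝 t → HasDerivAt A (Real.exp (2 * u t) * (1 + 2 * deriv u t * t)) t := by
    intro t h
    have h2 : HasDerivAt (fun x => Real.exp (2 * u x)) (Real.exp (2 * u t) * (2 * deriv u t)) t :=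
      ((hu' t h).const_mul 2).exp
    have h3 := h2.mul (hasDerivAt_id t)
    exact (h2.mul (hasDerivAt_id' t)).congr_deriv (by ring)
  have hmono : StrictMonoOn A I := by
    apply strictMonoOn_of_deriv_pos hconv hAcont
    intro x hx
    rw [hint] at hx
    rw [(hAder x (hmemJ x hx.1 hx.2)).deriv]
    exact mul_pos (Real.exp_pos _) (hpos x hx.1)
  have hinj : InjOn A I := hmono.injOn
  have hAnn : ∀ t ∈ I, 0 ≤ A t := fun t ht => mul_nonneg (Real.exp_pos _).le (hIsub ht)
  have hApos : ∀ t ∈ I, t ≠ 0 → 0 < A t := fun t ht hne =>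
    mul_pos (Real.exp_pos _) (lt_of_le_of_ne (hIsub ht) (Ne.symm hne))
  -- coverage of image by intermediate value theorem
  have hcov : ∀ t' ∈ I, Ioo 0 (A t') ⊆ A '' Ioo 0 t' := by
    intro t' ht'
    have h0t' : (0:ℝ) ≤ t' := hIsub ht'
    have hsub : Icc (0:ℝ) t' ⊆ I := hIcc 0 h0I t' ht'
    have := intermediate_value_Ioo h0t' (hAcont.mono hsub)
    rwa [hA0] at this
  -- the inverse map w
  set w : ℝ → ℝ := Function.invFunOn A I with hwdef
  have hwA : ∀ t ∈ I, w (A t) = t := fun t ht => hinj.leftInvOn_invFunOn ht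
  have hw0 : w 0 = 0 := by have := hwA 0 h0I; rwa [hA0] at this
  -- continuity of w at interior image points
  have hwcont : ∀ t₀ ∈ I, t₀ ≠ 0 → ContinuousAt w (A t₀) := by
    intro t₀ ht₀ hne
    have ht₀pos : 0 < t₀ := lt_of_le_of_ne (hIsub ht₀) (Ne.symm hne)
    obtain ⟨t', ht', htt'⟩ := hup t₀ ht₀
    rw [Metric.continuousAt_iff]
    rw [hwA t₀ ht₀]
    intro ε hε
    set η := min (ε / 2) (min (t₀ / 2) ((t' - t₀) / 2)) with hη
    have hηpos : 0 < η := by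
      apply lt_min (by linarith) (lt_min (by linarith) (by linarith))
    have hη1 : η ≤ ε / 2 := min_le_left _ _
    have hη2 : η ≤ t₀ / 2 := le_trans (min_le_right _ _) (min_le_left _ _)
    have hη3 : η ≤ (t' - t₀) / 2 := le_trans (min_le_right _ _) (min_le_right _ _)
    have hmem1 : t₀ - η ∈ I := hIcc 0 h0I t₀ ht₀ ⟨by linarith, by linarith⟩
    have hmem2 : t₀ + η ∈ I := hIcc 0 h0I t' ht' ⟨by linarith, by linarith⟩
    have hlt1 : A (t₀ - η) < A t₀ := hmono hmem1 ht₀ (by linarith)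
    have hlt2 : A t₀ < A (t₀ + η) := hmono ht₀ hmem2 (by linarith)
    refine ⟨min (A t₀ - A (t₀ - η)) (A (t₀ + η) - A t₀),
      lt_min (by linarith) (by linarith), ?_⟩
    intro s hs
    rw [Real.dist_eq] at hs ⊢
    have hsabs := abs_lt.mp hs
    have hs1 : A (t₀ - η) < s := by
      have := min_le_left (A t₀ - A (t₀ - η)) (A (t₀ + η) - A t₀); linarith
    have hs2 : s < A (t₀ + η) := by
      have := min_le_right (A t₀ - A (t₀ - η)) (A (t₀ + η) - A t₀); linarith
    have hsubI : Icc (t₀ - η) (t₀ + η) ⊆ I := hIcc _ hmem1 _ hmem2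
    have hsmem : s ∈ A '' Ioo (t₀ - η) (t₀ + η) :=
      intermediate_value_Ioo (by linarith) (hAcont.mono hsubI) ⟨hs1, hs2⟩
    obtain ⟨x, hx, hxs⟩ := hsmem
    have hxI : x ∈ I := hsubI ⟨hx.1.le, hx.2.le⟩
    have hws : w s = x := by rw [← hxs, hwA x hxI]
    rw [hws]
    have : |x - t₀| < η := abs_lt.mpr ⟨by linarith [hx.1], by linarith [hx.2]⟩
    linarith
  -- local right-inverse property
  have hwinv_ev : ∀ t' ∈ I, ∀ s ∈ Ioo 0 (A t'), A (w s) = s ∧ w s ∈ I ∧ 0 < w s ∧ w s < t' := by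
    intro t' ht' s hs
    obtain ⟨x, hx, hxs⟩ := hcov t' ht' hs
    have hxI : x ∈ I := hIcc 0 h0I t' ht' ⟨hx.1.le, hx.2.le⟩
    have hws : w s = x := by rw [← hxs, hwA x hxI]
    rw [hws, hxs]
    exact ⟨rfl, hxI, hx.1, hx.2⟩
  -- derivative of w at interior image points
  have hwder : ∀ t₀ ∈ I, t₀ ≠ 0 →
      HasDerivAt w (Real.exp (2 * u t₀) * (1 + 2 * deriv u t₀ * t₀))⁻¹ (A t₀) := by
    intro t₀ ht₀ hne
    obtain ⟨t', ht', htt'⟩ := hup t₀ ht₀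
    have hne' : t' ≠ 0 := by
      have := hIsub ht₀; intro h; rw [h] at htt'
      exact absurd htt' (not_lt.mpr (hIsub ht₀))
    have hnb : Ioo (0:ℝ) (A t') ∈ 𝓝 (A t₀) :=
      isOpen_Ioo.mem_nhds ⟨hApos t₀ ht₀ hne, hmono ht₀ ht' htt'⟩
    refine HasDerivAt.of_local_left_inverse (f := A) (hwcont t₀ ht₀ hne) ?_ ?_ ?_
    · rw [hwA t₀ ht₀]; exact hAder t₀ (hmemJ t₀ ht₀ hne)
    · exact ne_of_gt (mul_pos (Real.exp_pos _) (hpos t₀ ht₀))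
    · filter_upwards [hnb] with s hs using (hwinv_ev t' ht' s hs).1
  -- the derivative candidate G
  set hfun : ℝ → ℝ := fun τ =>
    -2 * derivWithin u I τ / ((1 + 2 * derivWithin u I τ * τ) * Real.exp (2 * u τ)) with hhfun
  set K : ℝ := hfun 0 with hKdef
  set q : ℝ → ℝ := fun τ => (1 + 2 * deriv u τ * τ)⁻¹ with hq
  set G : ℝ → ℝ := fun s => if s < 0 then 1 + K * s else q (w s) with hGdef
  have hG0 : G 0 = 1 := by simp [hGdef, hw0, hq]
  have hGA : ∀ t ∈ I, G (A t) = q t := by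
    intro t ht
    have : ¬ A t < 0 := not_lt.mpr (hAnn t ht)
    simp only [hGdef, this, if_false, hwA t ht]
  -- derivative of G at interior image points
  have hGder : ∀ t ∈ I, t ≠ 0 →
      HasDerivAt G (-(2 * (deriv (deriv u) t * t + deriv u t)) / (1 + 2 * deriv u t * t) ^ 2 *
        (Real.exp (2 * u t) * (1 + 2 * deriv u t * t))⁻¹) (A t) := by
    intro t ht hne
    have hb := hpos t ht
    have hqder : HasDerivAt q
        (-(2 * (deriv (deriv u) t * t + deriv u t)) / (1 + 2 * deriv u t * t) ^ 2) t := by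
      have h1 : HasDerivAt (fun τ => 1 + 2 * deriv u τ * τ)
          (2 * (deriv (deriv u) t * t + deriv u t)) t := by
        have h2 : HasDerivAt (fun y => deriv u y * y)
            (deriv (deriv u) t * t + deriv u t) t := by
          exact ((hu'' t ht hne).mul (hasDerivAt_id' t)).congr_deriv (by ring)
        have h3 := (h2.const_mul 2).const_add 1
        simpa [mul_assoc] using h3
      have := h1.inv (ne_of_gt hb)
      exact this
    have hwd := hwder t ht hne
    have hcomp := HasDerivAt.comp (A t) (by rw [hwA t ht]; exact hqder) hwd
    apply hcomp.congr_of_eventuallyEq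
    filter_upwards [Ioi_mem_nhds (hApos t ht hne)] with s hs
    simp only [hGdef, Function.comp, not_lt.mpr (le_of_lt (show (0:ℝ) < s from hs)), if_false]
  -- derivative of G at 0
  have hbne0 : ((1 : ℝ) + 2 * derivWithin u I 0 * 0) * Real.exp (2 * u 0) ≠ 0 := by
    simp [Real.exp_ne_zero]
  have hder0 : HasDerivAt G K 0 := by
    have hic : HasDerivWithinAt G K (Iic 0) 0 := by
      have hl : HasDerivAt (fun s : ℝ => 1 + K * s) K 0 := by
        simpa using ((hasDerivAt_id (0:ℝ)).const_mul K).const_add 1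
      refine hl.hasDerivWithinAt.congr ?_ (by simp [hG0])
      intro s hs
      rcases lt_or_eq_of_le (mem_Iic.mp hs) with h | h
      · simp [hGdef, h]
      · rw [h]; simp [hG0]
    have hici : HasDerivWithinAt G K (Ici 0) 0 := by
      rw [hasDerivWithinAt_iff_tendsto_slope, Ici_sdiff_left]
      obtain ⟨t', ht', ht'pos⟩ := hup 0 h0I
      -- tendsto of w to 0 within I
      have hwt : Tendsto w (𝓝[>] (0:ℝ)) (𝓝[I] 0) := by
        rw [tendsto_nhdsWithin_iff]
        constructor
        · rw [Metric.tendsto_nhds]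
          intro ε hε
          set τ := min (t' / 2) (ε / 2) with hτ
          have hτpos : 0 < τ := lt_min (by linarith) (by linarith)
          have hτI : τ ∈ I := hIcc 0 h0I t' ht' ⟨hτpos.le, by
            have := min_le_left (t'/2) (ε/2); linarith⟩
          have hAτ : 0 < A τ := hApos τ hτI (ne_of_gt hτpos)
          filter_upwards [Ioo_mem_nhdsGT_of_mem (⟨le_refl (0:ℝ), hAτ⟩ : (0:ℝ) ∈ Ico 0 (A τ))]
            with s hs
          obtain ⟨-, -, hw1, hw2⟩ := hwinv_ev τ hτI s hs
          rw [Real.dist_eq]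
          have := min_le_right (t'/2) (ε/2)
          rw [abs_lt]; constructor <;> [linarith; linarith]
        · have hAt' : 0 < A t' := hApos t' ht' (ne_of_gt ht'pos)
          filter_upwards [Ioo_mem_nhdsGT_of_mem (⟨le_refl (0:ℝ), hAt'⟩ : (0:ℝ) ∈ Ico 0 (A t'))]
            with s hs
          exact (hwinv_ev t' ht' s hs).2.1
      have hhc : ContinuousWithinAt hfun I 0 := by
        apply ContinuousWithinAt.div
        · exact (continuousWithinAt_const.mul (hdW 0 h0I))
        · apply ContinuousWithinAt.mul
          · exact continuousWithinAt_const.add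
              ((continuousWithinAt_const.mul (hdW 0 h0I)).mul continuousWithinAt_id)
          · exact (Real.continuous_exp.continuousAt.comp_continuousWithinAt
              (continuousWithinAt_const.mul ((huinf.continuousOn) 0 h0I)))
        · exact hbne0
      have htend : Tendsto (fun s => hfun (w s)) (𝓝[>] (0:ℝ)) (𝓝 K) := by
        rw [hKdef]
        exact hhc.tendsto.comp hwt
      apply htend.congr'
      have hAt' : 0 < A t' := hApos t' ht' (ne_of_gt ht'pos)
      filter_upwards [Ioo_mem_nhdsGT_of_mem (⟨le_refl (0:ℝ), hAt'⟩ : (0:ℝ) ∈ Ico 0 (A t'))]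
        with s hs
      obtain ⟨hAw, hwI, hw1, hw2⟩ := hwinv_ev t' ht' s hs
      have hwne : w s ≠ 0 := ne_of_gt hw1
      have hdeq : derivWithin u I (w s) = deriv u (w s) := hdWeq _ hwI hwne
      have hGs : G s = q (w s) := by
        simp only [hGdef, not_lt.mpr hs.1.le, if_false]
      have hbpos := hpos (w s) hwI
      have hEpos := Real.exp_pos (2 * u (w s))
      rw [slope_def_field, hGs, hG0]
      simp only [hq, hhfun]
      rw [← hdeq]
      set τ := w s with hτ
      have hsA : s = Real.exp (2 * u τ) * τ := by rw [← hAw]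
      rw [hsA]
      rw [hdeq]
      have hbpos' : (0:ℝ) < 1 + 2 * deriv u τ * τ := hbpos
      rw [← hdeq] at hbpos'
      field_simp
      ring
    have := hic.union hici
    rwa [Iic_union_Ici, hasDerivWithinAt_univ] at this
  -- global continuity of G below A t'
  have hGcont : ∀ t' ∈ I, 0 < t' → ∀ s ∈ Iio (A t'), ContinuousAt G s := by
    intro t' ht' ht'pos s hs
    rcases lt_trichotomy s 0 with h | h | h
    · have hev : ∀ᶠ x in 𝓝 s, (fun x : ℝ => 1 + K * x) x = G x := by
        filter_upwards [Iio_mem_nhds h] with x hx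
        exact (if_pos hx).symm
      exact ContinuousAt.congr (by fun_prop) hev
    · rw [h]; exact hder0.continuousAt
    · obtain ⟨hAw, hwI, hw1, hw2⟩ := hwinv_ev t' ht' s ⟨h, hs⟩
      have := (hGder (w s) hwI (ne_of_gt hw1)).continuousAt
      rwa [hAw] at this
  -- the function Φ
  set Φ : ℝ → ℝ := fun s => ∫ x in (0:ℝ)..s, G x with hΦdef
  have hΦder : ∀ t' ∈ I, 0 < t' → ∀ s ∈ Iio (A t'), HasDerivAt Φ (G s) s := by
    intro t' ht' ht'p s hs
    have hAt' : 0 < A t' := hApos t' ht' (ne_of_gt ht'p)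
    have hGc : ContinuousOn G (Iio (A t')) := fun x hx =>
      (hGcont t' ht' ht'p x hx).continuousWithinAt
    apply intervalIntegral.integral_hasDerivAt_right
    · apply ContinuousOn.intervalIntegrable
      apply hGc.mono
      intro x hx
      rw [Set.uIcc_eq_union] at hx
      rcases hx with hx | hx
      · exact lt_of_le_of_lt hx.2 hs
      · exact lt_of_le_of_lt hx.2 hAt'
    · exact hGc.stronglyMeasurableAtFilter isOpen_Iio s hs
    · exact hGcont t' ht' ht'p s hs
  have hΦderiv : ∀ t' ∈ I, 0 < t' → ∀ s ∈ Iio (A t'), deriv Φ s = G s :=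
    fun t' ht' ht'p s hs => (hΦder t' ht' ht'p s hs).deriv
  refine ⟨Φ, ?_, ?_⟩
  · rintro s ⟨t₀, ht₀, rfl⟩
    obtain ⟨t', ht', htt'⟩ := hup t₀ ht₀
    have ht'pos : 0 < t' := lt_of_le_of_lt (hIsub ht₀) htt'
    have hsIio : A t₀ ∈ Iio (A t') := hmono ht₀ ht' htt'
    have hnb : Iio (A t') ∈ 𝓝 (A t₀) := isOpen_Iio.mem_nhds hsIio
    have hDG : DifferentiableAt ℝ G (A t₀) := by
      rcases eq_or_ne t₀ 0 with h | h
      · rw [h, hA0]; exact hder0.differentiableAt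
      · exact (hGder t₀ ht₀ h).differentiableAt
    have hev : deriv Φ =ᶠ[𝓝 (A t₀)] G := by
      filter_upwards [hnb] with s hs using hΦderiv t' ht' ht'pos s hs
    refine ⟨(hΦder t' ht' ht'pos _ hsIio).differentiableAt, ?_, ?_⟩
    · exact (Filter.EventuallyEq.differentiableAt_iff hev).mpr hDG
    · rw [hΦderiv t' ht' ht'pos _ hsIio, hGA t₀ ht₀, hq]
      exact inv_pos.mpr (hpos t₀ ht₀)
  · intro t ht hne
    obtain ⟨t', ht', htt'⟩ := hup t ht
    have ht'pos : 0 < t' := lt_of_le_of_lt (hIsub ht) htt'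
    have hsIio : A t ∈ Iio (A t') := hmono ht ht' htt'
    have hnb : Iio (A t') ∈ 𝓝 (A t) := isOpen_Iio.mem_nhds hsIio
    have hev : deriv Φ =ᶠ[𝓝 (A t)] G := by
      filter_upwards [hnb] with s hs using hΦderiv t' ht' ht'pos s hs
    have hd1 : deriv Φ (A t) = q t := by rw [hΦderiv t' ht' ht'pos _ hsIio, hGA t ht]
    have hd2 : deriv (deriv Φ) (A t) =
        -(2 * (deriv (deriv u) t * t + deriv u t)) / (1 + 2 * deriv u t * t) ^ 2 *
          (Real.exp (2 * u t) * (1 + 2 * deriv u t * t))⁻¹ := by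
      rw [hev.deriv_eq]
      exact (hGder t ht hne).deriv
    show deriv (deriv Φ) (A t) * Real.exp (2 * u t) * (1 + 2 * deriv u t * t) ^ 2 +
        2 * deriv Φ (A t) * (deriv (deriv u) t * t + deriv u t) = 0
    rw [hd1, hd2, hq]
    have hb := hpos t ht
    have hE := Real.exp_pos (2 * u t)
    field_simp
    ring
end

section
/- Let c > 0 and let x : (−c, c) → ℝ be a twice continuously differentiable function with x(t) > 0 for all t ∈ (−c, c), satisfying x''(t)/(1 + x'(t)²) = 1/x(t) − (1/2)(x(t) − x'(t)·t) for all t ∈ (−c, c), and with x'(0) = 0. Then x(−t) = x(t) for all t ∈ (−c, c). -/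
/-!
Writing the equation as the first-order system `(x, x')' = F(t, x, x')` with `F` smooth on
`x > 0`, the change of variables `(t, x, x') ↦ (-t, x, -x')` maps solutions to solutions. So
`t ↦ (x (-t), -x' (-t))` is a second solution, and it has the same value at `0` because
`x'(0) = 0`. A `C¹` field is Lipschitz on the compact graphs of both solutions over any compact
time interval, so the Grönwall uniqueness theorem forces the two solutions to coincide.
-/

open Set Function

theorem LipschitzOnWith.slice {α β γ : Type*} [PseudoMetricSpace α] [PseudoMetricSpace β]
    [PseudoMetricSpace γ] {v : α → β → γ} {K : NNReal} {C : Set (α × β)}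
    (hK : LipschitzOnWith K (uncurry v) C) {t : α} {s : Set β} (hs : ∀ p ∈ s, (t, p) ∈ C) :
    LipschitzOnWith K (v t) s := by
  have h := hK.comp (LipschitzWith.prodMk_left t).lipschitzOnWith hs
  rwa [mul_one] at h

section Uniqueness

variable {E : Type*} [NormedAddCommGroup E] [NormedSpace ℝ E] {v : ℝ → E → E} {D : Set (ℝ × E)}

theorem exists_lipschitzOnWith_pair_of_contDiffOn (hD : IsOpen D)
    (hv : ContDiffOn ℝ 1 (uncurry v) D) {f g : ℝ → E} {a b : ℝ}
    (hf : ContinuousOn f (Icc a b)) (hg : ContinuousOn g (Icc a b))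
    (hfD : ∀ t ∈ Icc a b, (t, f t) ∈ D) (hgD : ∀ t ∈ Icc a b, (t, g t) ∈ D) :
    ∃ K, ∀ t ∈ Icc a b, LipschitzOnWith K (v t) {f t, g t} := by
  set C := (fun t ↦ (t, f t)) '' Icc a b ∪ (fun t ↦ (t, g t)) '' Icc a b
  have hC : IsCompact C :=
    (isCompact_Icc.image_of_continuousOn (continuousOn_id.prodMk hf)).union
      (isCompact_Icc.image_of_continuousOn (continuousOn_id.prodMk hg))
  have hCD : C ⊆ D := union_subset (image_subset_iff.2 hfD) (image_subset_iff.2 hgD)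
  have hloc : LocallyLipschitzOn C (uncurry v) := fun q hq ↦ by
    obtain ⟨K, U, hU, hK⟩ := (hv.contDiffAt (hD.mem_nhds (hCD hq))).exists_lipschitzOnWith
    exact ⟨K, U, nhdsWithin_le_nhds hU, hK⟩
  obtain ⟨K, hK⟩ := hloc.exists_lipschitzOnWith_of_compact hC
  refine ⟨K, fun t ht ↦ hK.slice ?_⟩
  rintro p (rfl | rfl)
  exacts [.inl ⟨t, ht, rfl⟩, .inr ⟨t, ht, rfl⟩]

theorem ODE_solution_unique_of_contDiffOn (hD : IsOpen D) (hv : ContDiffOn ℝ 1 (uncurry v) D)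
    {f g : ℝ → E} {a b t₀ : ℝ} (ht₀ : t₀ ∈ Ioo a b)
    (hf : ∀ t ∈ Ioo a b, HasDerivAt f (v t (f t)) t ∧ (t, f t) ∈ D)
    (hg : ∀ t ∈ Ioo a b, HasDerivAt g (v t (g t)) t ∧ (t, g t) ∈ D)
    (heq : f t₀ = g t₀) : EqOn f g (Ioo a b) := by
  intro t ht
  obtain ⟨a', ha', ha't⟩ := exists_between (lt_min ht.1 ht₀.1)
  obtain ⟨b', hb't, hb'⟩ := exists_between (max_lt ht.2 ht₀.2)
  rw [lt_min_iff] at ha't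
  rw [max_lt_iff] at hb't
  have hsub : Icc a' b' ⊆ Ioo a b := Icc_subset_Ioo ha' hb'
  obtain ⟨K, hK⟩ := exists_lipschitzOnWith_pair_of_contDiffOn hD hv
    (HasDerivAt.continuousOn fun s hs ↦ (hf s (hsub hs)).1)
    (HasDerivAt.continuousOn fun s hs ↦ (hg s (hsub hs)).1)
    (fun s hs ↦ (hf s (hsub hs)).2) (fun s hs ↦ (hg s (hsub hs)).2)
  have hsub' : Ioo a' b' ⊆ Ioo a b := Ioo_subset_Icc_self.trans hsub
  -- Lipschitz continuity is only needed on the two-point sets `{f s, g s}`.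
  exact ODE_solution_unique_of_mem_Ioo (s := fun s ↦ {f s, g s})
    (fun s hs ↦ hK s (Ioo_subset_Icc_self hs)) ⟨ha't.2, hb't.2⟩
    (fun s hs ↦ ⟨(hf s (hsub' hs)).1, .inl rfl⟩) (fun s hs ↦ ⟨(hg s (hsub' hs)).1, .inr rfl⟩)
    heq ⟨ha't.1, hb't.1⟩

end Uniqueness

noncomputable def profileField (t : ℝ) (p : ℝ × ℝ) : ℝ × ℝ :=
  (p.2, (1 + p.2 ^ 2) * (1 / p.1 - (1 / 2) * (p.1 - p.2 * t)))

theorem contDiffOn_profileField :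
    ContDiffOn ℝ 1 (uncurry profileField) {q : ℝ × ℝ × ℝ | 0 < q.2.1} := by
  change ContDiffOn ℝ 1
    (fun q : ℝ × ℝ × ℝ ↦ (q.2.2, (1 + q.2.2 ^ 2) * (1 / q.2.1 - (1 / 2) * (q.2.1 - q.2.2 * q.1))))
    _
  intro q hq
  have : q.2.1 ≠ 0 := hq.ne'
  fun_prop (disch := assumption)

section ProfileCurve

variable {u w : ℝ → ℝ} {w' t : ℝ}

theorem hasDerivAt_profileField (hu : HasDerivAt u (w t) t) (hw : HasDerivAt w w' t)
    (hode : w' / (1 + w t ^ 2) = 1 / u t - (1 / 2) * (u t - w t * t)) :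
    HasDerivAt (fun s ↦ (u s, w s)) (profileField t (u t, w t)) t := by
  refine (hu.prodMk hw).congr_deriv ?_
  rw [profileField, ← hode, mul_div_cancel₀ _ (by positivity)]

theorem hasDerivAt_profileField_reflect (hu : HasDerivAt u (w (-t)) (-t))
    (hw : HasDerivAt w w' (-t))
    (hode : w' / (1 + w (-t) ^ 2) = 1 / u (-t) - (1 / 2) * (u (-t) - w (-t) * -t)) :
    HasDerivAt (fun s ↦ (u (-s), -w (-s))) (profileField t (u (-t), -w (-t))) t := by
  refine hasDerivAt_profileField (w := fun s ↦ -w (-s)) (w' := w') ?_ ?_ ?_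
  · have h := hu.comp t (hasDerivAt_neg t)
    rwa [mul_neg_one] at h
  · have h := (hw.comp t (hasDerivAt_neg t)).neg
    rwa [mul_neg_one, neg_neg] at h
  · simpa [neg_sq, mul_neg] using hode

end ProfileCurve

/-- A positive `C²` solution on `(−c, c)` of the profile-curve equation
`x''/(1 + x'²) = 1/x − (1/2)(x − x' t)` for minimal surfaces of revolution in the Gaussian
space, with `x'(0) = 0`, is even: `x (−t) = x t` for all `t ∈ (−c, c)`. -/
theorem stmt10 (c : ℝ) (hc : 0 < c) (x : ℝ → ℝ)
    (hx : ContDiffOn ℝ 2 x (Set.Ioo (-c) c))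
    (hpos : ∀ t ∈ Set.Ioo (-c) c, 0 < x t)
    (hode : ∀ t ∈ Set.Ioo (-c) c,
      deriv (deriv x) t / (1 + (deriv x t) ^ 2)
        = 1 / x t - (1 / 2) * (x t - deriv x t * t))
    (h0 : deriv x 0 = 0) :
    ∀ t ∈ Set.Ioo (-c) c, x (-t) = x t := by
  have hx' : ∀ t ∈ Ioo (-c) c, HasDerivAt x (deriv x t) t := fun t ht ↦
    ((hx.differentiableOn two_ne_zero).differentiableAt (isOpen_Ioo.mem_nhds ht)).hasDerivAt
  have hx'' : ∀ t ∈ Ioo (-c) c, HasDerivAt (deriv x) (deriv (deriv x) t) t := fun t ht ↦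
    (((hx.deriv_of_isOpen isOpen_Ioo (by norm_num)).differentiableOn one_ne_zero).differentiableAt
      (isOpen_Ioo.mem_nhds ht)).hasDerivAt
  have hneg : ∀ t ∈ Ioo (-c) c, -t ∈ Ioo (-c) c := fun t ht ↦ neg_mem_Ioo_iff.2 (by rwa [neg_neg])
  have hsymm : EqOn (fun t ↦ (x t, deriv x t)) (fun t ↦ (x (-t), -deriv x (-t))) (Ioo (-c) c) :=
    ODE_solution_unique_of_contDiffOn (isOpen_lt continuous_const (by fun_prop))
      contDiffOn_profileField (t₀ := 0) ⟨neg_neg_iff_pos.2 hc, hc⟩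
      (fun t ht ↦ ⟨hasDerivAt_profileField (hx' t ht) (hx'' t ht) (hode t ht), hpos t ht⟩)
      (fun t ht ↦ ⟨hasDerivAt_profileField_reflect (hx' (-t) (hneg t ht)) (hx'' (-t) (hneg t ht))
        (hode (-t) (hneg t ht)), hpos (-t) (hneg t ht)⟩)
      (by simp [h0])
  exact fun t ht ↦ (congrArg Prod.fst (hsymm ht)).symm
end

section
/- Let c > 0 and let x : (−c, c) → ℝ be a twice continuously differentiable function with x(t) > 0 for all t ∈ (−c, c), satisfying x''(t)/(1 + x'(t)²) = 1/x(t) − (1/2)(x(t) − x'(t)·t) for all t ∈ (−c, c), with x'(0) = 0 and 0 < x(0) < √(4 − 2√2). Define f̄ : (−c, c) → ℝ by f̄(t) = e^{(x(t)² + t²)/8}·( x'(t)/(x(t)√(1 + x'(t)²)) − (x(t)x'(t) + t)/(4√(1 + x'(t)²)) ). Then f̄'(0) = e^{x(0)²/8}·(x(0)⁴ − 8x(0)² + 8)/(8x(0)²) > 0, and consequently there exists δ ∈ (0, c) such that f̄(δ) > 0. -/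
/-!
Since `x'(0) = 0`, the function `f̄` vanishes at `0`, and writing it as
`e^{(x² + t²)/8} / √(1 + x'²)` times `x'/x − (x x' + t)/4` (which vanishes at `0`) gives
`f̄'(0) = e^{a²/8} (x''(0)/a − (a x''(0) + 1)/4)` with `a = x(0)`. The equation at `t = 0` reads
`x''(0) = 1/a − a/2`, which turns this into `e^{a²/8} (a⁴ − 8a² + 8)/(8a²)`. The numerator is
`(4 − a²)² − 8 > 0` when `a² < 4 − 2√2`, and a function vanishing at `0` with positive derivative
there is positive just to the right of `0`.
-/

open Real Set Filter Topology

lemma exists_mem_Ioo_pos_of_deriv_pos {f : ℝ → ℝ} {a b : ℝ} (hab : a < b)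
    (hf : 0 < deriv f a) (ha : f a = 0) : ∃ δ ∈ Ioo a b, 0 < f δ := by
  have hsign : ∀ᶠ t in 𝓝[>] a, SignType.sign (f t) = SignType.sign (t - a) :=
    (eventually_nhdsWithin_sign_eq_of_deriv_pos hf ha).filter_mono nhdsWithin_le_nhds
  obtain ⟨δ, hδsign, hδ⟩ := (hsign.and (Ioo_mem_nhdsGT hab)).exists
  rw [sign_pos (sub_pos.mpr hδ.1), sign_eq_one_iff] at hδsign
  exact ⟨δ, hδ, hδsign⟩

lemma ContDiffOn.hasDerivAt_deriv_of_isOpen {𝕜 : Type*} [NontriviallyNormedField 𝕜]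
    {f : 𝕜 → 𝕜} {s : Set 𝕜} {t : 𝕜} (hf : ContDiffOn 𝕜 2 f s) (hs : IsOpen s) (ht : t ∈ s) :
    HasDerivAt (deriv f) (deriv (deriv f) t) t :=
  (((hf.deriv_of_isOpen hs (by norm_num : (1 : WithTop ℕ∞) + 1 ≤ 2)).contDiffAt
    (hs.mem_nhds ht)).differentiableAt one_ne_zero).hasDerivAt

lemma HasDerivAt.mul_of_eq_zero {𝕜 : Type*} [NontriviallyNormedField 𝕜] {h g : 𝕜 → 𝕜}
    {g' t : 𝕜} (hg : HasDerivAt g g' t) (hgt : g t = 0) (hh : DifferentiableAt 𝕜 h t) :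
    HasDerivAt (fun s => h s * g s) (h t * g') t := by
  simpa [hgt] using hh.hasDerivAt.fun_mul hg

noncomputable def gaussianGeodesicCurvature (x : ℝ → ℝ) (t : ℝ) : ℝ :=
  exp ((x t ^ 2 + t ^ 2) / 8) *
    (deriv x t / (x t * √(1 + deriv x t ^ 2)) -
      (x t * deriv x t + t) / (4 * √(1 + deriv x t ^ 2)))

lemma gaussianGeodesicCurvature_eq_mul (x : ℝ → ℝ) (t : ℝ) :
    gaussianGeodesicCurvature x t =
      exp ((x t ^ 2 + t ^ 2) / 8) / √(1 + deriv x t ^ 2) *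
        (deriv x t / x t - (x t * deriv x t + t) / 4) := by
  rw [gaussianGeodesicCurvature]
  ring

lemma hasDerivAt_gaussianGeodesicCurvature_zero {x : ℝ → ℝ} {A : ℝ} (hx : HasDerivAt x 0 0)
    (hx' : HasDerivAt (deriv x) A 0) (hx0 : x 0 ≠ 0) :
    HasDerivAt (gaussianGeodesicCurvature x) (exp (x 0 ^ 2 / 8) * (A / x 0 - (x 0 * A + 1) / 4))
      0 := by
  have hd0 : deriv x 0 = 0 := hx.deriv
  have hg : HasDerivAt (fun t => deriv x t / x t - (x t * deriv x t + t) / 4)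
      (A / x 0 - (x 0 * A + 1) / 4) 0 := by
    refine ((hx'.fun_div hx hx0).fun_sub
      (((hx.fun_mul hx').fun_add (hasDerivAt_id' 0)).div_const 4)).congr_deriv ?_
    rw [hd0]
    field_simp
    ring
  have hm : DifferentiableAt ℝ
      (fun t => exp ((x t ^ 2 + t ^ 2) / 8) / √(1 + deriv x t ^ 2)) 0 := by
    have := hx.differentiableAt
    have := hx'.differentiableAt
    fun_prop (disch := positivity)
  simp_rw [funext (gaussianGeodesicCurvature_eq_mul x)]
  simpa [hd0] using hg.mul_of_eq_zero (by simp [hd0]) hm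

lemma quartic_pos_of_sq_lt_four_sub_two_sqrt_two {a : ℝ} (ha : a ^ 2 < 4 - 2 * √2) :
    0 < a ^ 4 - 8 * a ^ 2 + 8 := by
  have hsqrt2 : √2 ^ 2 = 2 := sq_sqrt zero_le_two
  nlinarith [sqrt_nonneg 2]

theorem stmt11_general (c : ℝ) (hc : 0 < c) (x : ℝ → ℝ)
    (hx : ContDiffOn ℝ 2 x (Set.Ioo (-c) c))
    (hode : ∀ t ∈ Set.Ioo (-c) c,
      deriv (deriv x) t / (1 + (deriv x t) ^ 2)
        = 1 / x t - (1 / 2) * (x t - deriv x t * t))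
    (h0 : deriv x 0 = 0) (hx0pos : 0 < x 0)
    (hx0lt : x 0 < Real.sqrt (4 - 2 * Real.sqrt 2))
    (fbar : ℝ → ℝ)
    (hfbar : fbar = fun t => Real.exp ((x t ^ 2 + t ^ 2) / 8) *
      (deriv x t / (x t * Real.sqrt (1 + (deriv x t) ^ 2)) -
        (x t * deriv x t + t) / (4 * Real.sqrt (1 + (deriv x t) ^ 2)))) :
    deriv fbar 0 = Real.exp (x 0 ^ 2 / 8) * (x 0 ^ 4 - 8 * x 0 ^ 2 + 8) / (8 * x 0 ^ 2) ∧
    0 < deriv fbar 0 ∧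
    ∃ δ : ℝ, 0 < δ ∧ δ < c ∧ 0 < fbar δ := by
  have hmem : (0 : ℝ) ∈ Ioo (-c) c := ⟨neg_lt_zero.mpr hc, hc⟩
  have hx' : HasDerivAt x 0 0 :=
    ((hx.differentiableOn (by norm_num)).differentiableAt (isOpen_Ioo.mem_nhds hmem)).hasDerivAt
      |>.congr_deriv h0
  have hA : deriv (deriv x) 0 = 1 / x 0 - x 0 / 2 := by
    simpa [h0, div_eq_mul_inv, mul_comm] using hode 0 hmem
  have hfbar' : HasDerivAt fbar
      (exp (x 0 ^ 2 / 8) * (x 0 ^ 4 - 8 * x 0 ^ 2 + 8) / (8 * x 0 ^ 2)) 0 := by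
    rw [show fbar = gaussianGeodesicCurvature x from hfbar]
    refine (hasDerivAt_gaussianGeodesicCurvature_zero hx'
      (hx.hasDerivAt_deriv_of_isOpen isOpen_Ioo hmem) hx0pos.ne').congr_deriv ?_
    rw [hA]
    field_simp
    ring
  have hpos : 0 < exp (x 0 ^ 2 / 8) * (x 0 ^ 4 - 8 * x 0 ^ 2 + 8) / (8 * x 0 ^ 2) := by
    have := quartic_pos_of_sq_lt_four_sub_two_sqrt_two ((lt_sqrt hx0pos.le).mp hx0lt)
    positivity
  obtain ⟨δ, hδ, hfδ⟩ :=
    exists_mem_Ioo_pos_of_deriv_pos hc (hfbar'.deriv ▸ hpos) (by simp [hfbar, h0])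
  exact ⟨hfbar'.deriv, hfbar'.deriv ▸ hpos, δ, hδ.1, hδ.2, hfδ⟩

/-- Let `x` be a positive `C²` solution on `(−c, c)` of the Gaussian
minimal-surface-of-revolution equation with `x'(0) = 0` and `0 < x 0 < √(4 − 2√2)`. Then
the conformal geodesic curvature function
`f̄ t = e^{(x t² + t²)/8} ( x'/(x √(1+x'²)) − (x x' + t)/(4 √(1+x'²)) )`
satisfies `f̄'(0) = e^{x(0)²/8} (x(0)⁴ − 8x(0)² + 8)/(8 x(0)²) > 0`, and consequently
there exists `δ ∈ (0, c)` with `f̄ δ > 0`. -/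
theorem stmt11 (c : ℝ) (hc : 0 < c) (x : ℝ → ℝ)
    (hx : ContDiffOn ℝ 2 x (Set.Ioo (-c) c))
    (hpos : ∀ t ∈ Set.Ioo (-c) c, 0 < x t)
    (hode : ∀ t ∈ Set.Ioo (-c) c,
      deriv (deriv x) t / (1 + (deriv x t) ^ 2)
        = 1 / x t - (1 / 2) * (x t - deriv x t * t))
    (h0 : deriv x 0 = 0) (hx0pos : 0 < x 0)
    (hx0lt : x 0 < Real.sqrt (4 - 2 * Real.sqrt 2))
    (fbar : ℝ → ℝ)
    (hfbar : fbar = fun t => Real.exp ((x t ^ 2 + t ^ 2) / 8) *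
      (deriv x t / (x t * Real.sqrt (1 + (deriv x t) ^ 2)) -
        (x t * deriv x t + t) / (4 * Real.sqrt (1 + (deriv x t) ^ 2)))) :
    deriv fbar 0 = Real.exp (x 0 ^ 2 / 8) * (x 0 ^ 4 - 8 * x 0 ^ 2 + 8) / (8 * x 0 ^ 2) ∧
    0 < deriv fbar 0 ∧
    ∃ δ : ℝ, 0 < δ ∧ δ < c ∧ 0 < fbar δ :=
  stmt11_general c hc x hx hode h0 hx0pos hx0lt fbar hfbar
end

section
/- Let c > 0 and let x : (−c, c) → ℝ be a twice continuously differentiable function with x(t) > 0 for all t ∈ (−c, c), satisfying x''(t)/(1 + x'(t)²) = 1/x(t) − (1/2)(x(t) − x'(t)·t) for all t ∈ (−c, c), with x'(0) = 0 and 0 < x(0) < √(4 − 2√2). Define, on a neighbourhood of 0 where x(t)² + t² < 4, the function F(t) = [4 − x(t)(x(t) − x'(t)t)]·(x(t) − x'(t)t) / ( x(t)·(4 − x(t)² − t²)·(1 + x'(t)²) ). Then F(0) = 1, F'(0) = 0, and F''(0) = (−x(0)⁴ + 8x(0)² − 8)/(2x(0)²) < 0; consequently there exists ε > 0 such that F(t)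 ≤ 1 for all t ∈ (−ε, ε). -/
/-!
With `u = x - t x'` one has `u' = -t x''`, and every factor of the numerator
`N = (4 - x u) u` and of the denominator `D = x (4 - x² - t²)(1 + x'²)` of `F` has vanishing
derivative at `0` because `x'(0) = 0`; moreover `N(0) = D(0)`. Hence `F(0) = 1`, `F'(0) = 0` and
`F''(0) = (N''(0) - D''(0)) / D(0)`, which `x''(0) = (2 - x(0)²)/(2x(0))` turns into
`(-x(0)⁴ + 8x(0)² - 8)/(2x(0)²)`. This is negative because `x(0)²` lies below the smaller root
`4 - 2√2` of `s² - 8s + 8`, and the second derivative test makes `0` a local maximum of `F`.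

Although `x` is only `C²`, `F''(0)` involves `x'''(0)`; it exists because the ODE writes `x''`
as a differentiable expression in `t, x, x'`, and it only enters multiplied by `t = 0`.
-/

open Filter Topology

/-- A second derivative at `a` together with a first-derivative function valid near `a`; carrying
`f'` along is what lets the second derivative follow the algebraic operations below. -/
def HasSecondDerivAt (f f' : ℝ → ℝ) (f'' a : ℝ) : Prop :=
  (∀ᶠ t in 𝓝 a, HasDerivAt f (f' t) t) ∧ HasDerivAt f' f'' a

namespace HasSecondDerivAt

variable {f g f' g' : ℝ → ℝ} {f'' g'' a : ℝ}

theorem hasDerivAt (hf : HasSecondDerivAt f f' f'' a) : HasDerivAt f (f' a) a :=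
  hf.1.self_of_nhds

theorem continuousAt (hf : HasSecondDerivAt f f' f'' a) : ContinuousAt f a :=
  hf.hasDerivAt.continuousAt

theorem const (c a : ℝ) : HasSecondDerivAt (fun _ => c) (fun _ => 0) 0 a :=
  ⟨.of_forall fun t => hasDerivAt_const t c, hasDerivAt_const a 0⟩

theorem id (a : ℝ) : HasSecondDerivAt (fun t => t) (fun _ => 1) 0 a :=
  ⟨.of_forall hasDerivAt_id', hasDerivAt_const a 1⟩

theorem add (hf : HasSecondDerivAt f f' f'' a) (hg : HasSecondDerivAt g g' g'' a) :
    HasSecondDerivAt (fun t => f t + g t) (fun t => f' t + g' t) (f'' + g'') a :=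
  ⟨by filter_upwards [hf.1, hg.1] with t hft hgt using hft.add hgt, hf.2.add hg.2⟩

theorem sub (hf : HasSecondDerivAt f f' f'' a) (hg : HasSecondDerivAt g g' g'' a) :
    HasSecondDerivAt (fun t => f t - g t) (fun t => f' t - g' t) (f'' - g'') a :=
  ⟨by filter_upwards [hf.1, hg.1] with t hft hgt using hft.sub hgt, hf.2.sub hg.2⟩

theorem mul (hf : HasSecondDerivAt f f' f'' a) (hg : HasSecondDerivAt g g' g'' a) :
    HasSecondDerivAt (fun t => f t * g t) (fun t => f' t * g t + f t * g' t)
      (f'' * g a + f' a * g' a + (f' a * g' a + f a * g'')) a :=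
  ⟨by filter_upwards [hf.1, hg.1] with t hft hgt using hft.mul hgt,
    (hf.2.mul hg.hasDerivAt).add (hf.hasDerivAt.mul hg.2)⟩

theorem sq (hf : HasSecondDerivAt f f' f'' a) :
    HasSecondDerivAt (fun t => f t ^ 2) (fun t => 2 * f t * f' t)
      (2 * (f' a ^ 2 + f a * f'')) a :=
  ⟨by filter_upwards [hf.1] with t ht using (ht.pow 2).congr_deriv (by ring),
    ((hf.hasDerivAt.const_mul 2).mul hf.2).congr_deriv (by ring)⟩

theorem div (hf : HasSecondDerivAt f f' f'' a) (hg : HasSecondDerivAt g g' g'' a) (ha : g a ≠ 0) :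
    HasSecondDerivAt (fun t => f t / g t) (fun t => (f' t * g t - f t * g' t) / g t ^ 2)
      (((f'' * g a - f a * g'') * g a - 2 * g' a * (f' a * g a - f a * g' a)) / g a ^ 3) a := by
  refine ⟨?_, ?_⟩
  · filter_upwards [hf.1, hg.1, hg.continuousAt.eventually_ne ha] with t hft hgt ht
    exact hft.div hgt ht
  · refine (((hf.2.fun_mul hg.hasDerivAt).fun_sub (hf.hasDerivAt.fun_mul hg.2)).fun_div
      (hg.hasDerivAt.fun_pow 2) (pow_ne_zero 2 ha)).congr_deriv ?_
    field_simp
    ring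

end HasSecondDerivAt

theorem HasSecondDerivAt.of_differentiableAt {f : ℝ → ℝ} {a : ℝ}
    (hf : ∀ᶠ t in 𝓝 a, DifferentiableAt ℝ f t) (hf' : DifferentiableAt ℝ (deriv f) a) :
    HasSecondDerivAt f (deriv f) (deriv (deriv f) a) a :=
  ⟨hf.mono fun _ ht => ht.hasDerivAt, hf'.hasDerivAt⟩

theorem HasSecondDerivAt.deriv_eq {f f' : ℝ → ℝ} {f'' a : ℝ} (hf : HasSecondDerivAt f f' f'' a) :
    deriv f a = f' a :=
  hf.hasDerivAt.deriv

theorem HasSecondDerivAt.deriv_deriv_eq {f f' : ℝ → ℝ} {f'' a : ℝ}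
    (hf : HasSecondDerivAt f f' f'' a) : deriv (deriv f) a = f'' := by
  have h : deriv f =ᶠ[𝓝 a] f' := hf.1.mono fun _ ht => ht.deriv
  rw [h.deriv_eq, hf.2.deriv]

noncomputable def gapFunction (x : ℝ → ℝ) : ℝ → ℝ := fun t =>
  (4 - x t * (x t - deriv x t * t)) * (x t - deriv x t * t) /
    (x t * (4 - x t ^ 2 - t ^ 2) * (1 + deriv x t ^ 2))

section GapFunction

variable {x : ℝ → ℝ}

theorem gapFunction_zero (h0 : deriv x 0 = 0) (ha : 0 < x 0) (ha4 : x 0 ^ 2 < 4) :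
    gapFunction x 0 = 1 := by
  have hD : x 0 * (4 - x 0 ^ 2) ≠ 0 := mul_ne_zero ha.ne' (by linarith)
  simp only [gapFunction, h0]
  rw [div_eq_one_iff_eq (by simpa using hD)]
  ring

open HasSecondDerivAt in
theorem hasSecondDerivAt_gapFunction (hx : ∀ᶠ t in 𝓝 0, DifferentiableAt ℝ x t)
    (hx' : ∀ᶠ t in 𝓝 0, DifferentiableAt ℝ (deriv x) t)
    (hx'' : DifferentiableAt ℝ (deriv (deriv x)) 0) (h0 : deriv x 0 = 0) (ha : 0 < x 0)
    (ha4 : x 0 ^ 2 < 4) (hb : deriv (deriv x) 0 = (2 - x 0 ^ 2) / (2 * x 0)) :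
    ∃ F', HasSecondDerivAt (gapFunction x) F'
      ((-(x 0 ^ 4) + 8 * x 0 ^ 2 - 8) / (2 * x 0 ^ 2)) 0 ∧ F' 0 = 0 := by
  have jx := of_differentiableAt hx hx'.self_of_nhds
  have jx' := of_differentiableAt hx' hx''
  have ju := jx.sub (jx'.mul (HasSecondDerivAt.id 0))
  have jN := ((const 4 0).sub (jx.mul ju)).mul ju
  have jD := (jx.mul (((const 4 0).sub jx.sq).sub (HasSecondDerivAt.id 0).sq)).mul
    ((const 1 0).add jx'.sq)
  have hx0 : x 0 ≠ 0 := ha.ne'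
  have h4 : 4 - x 0 ^ 2 ≠ 0 := by linarith
  have hD : x 0 * (4 - x 0 ^ 2 - 0 ^ 2) * (1 + deriv x 0 ^ 2) ≠ 0 := by
    simpa [h0] using mul_ne_zero hx0 h4
  have jF := jN.div jD hD
  exact ⟨_, by
    unfold gapFunction
    convert jF using 1
    simp only [h0, hb]
    norm_num
    field_simp
    ring, by simp [h0]⟩

end GapFunction

theorem ContDiffOn.eventually_differentiableAt_and_deriv {f : ℝ → ℝ} {s : Set ℝ} {a : ℝ}
    (hf : ContDiffOn ℝ 2 f s) (hs : IsOpen s) (ha : a ∈ s) :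
    ∀ᶠ t in 𝓝 a, DifferentiableAt ℝ f t ∧ DifferentiableAt ℝ (deriv f) t := by
  filter_upwards [hs.mem_nhds ha] with t ht
  exact ⟨(hf.differentiableOn two_ne_zero).differentiableAt (hs.mem_nhds ht),
    ((hf.deriv_of_isOpen hs le_rfl).differentiableOn one_ne_zero).differentiableAt
      (hs.mem_nhds ht)⟩

theorem differentiableAt_deriv_deriv_of_ode {x : ℝ → ℝ} {a : ℝ}
    (hode : ∀ᶠ t in 𝓝 a, deriv (deriv x) t / (1 + deriv x t ^ 2)
      = 1 / x t - 1 / 2 * (x t - deriv x t * t))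
    (hx : DifferentiableAt ℝ x a) (hx' : DifferentiableAt ℝ (deriv x) a) (ha : x a ≠ 0) :
    DifferentiableAt ℝ (deriv (deriv x)) a := by
  have h : deriv (deriv x) =ᶠ[𝓝 a]
      fun t => (1 + deriv x t ^ 2) * (1 / x t - 1 / 2 * (x t - deriv x t * t)) := by
    filter_upwards [hode] with t ht
    rw [← ht, mul_div_cancel₀ _ (by positivity)]
  refine DifferentiableAt.congr_of_eventuallyEq ?_ h
  fun_prop (disch := assumption)

theorem neg_pow_four_add_eight_mul_sq_sub_eight_neg {a : ℝ} (ha : a ^ 2 < 4 - 2 * Real.sqrt 2) :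
    -(a ^ 4) + 8 * a ^ 2 - 8 < 0 := by
  have hs : Real.sqrt 2 ^ 2 = 2 := Real.sq_sqrt zero_le_two
  nlinarith [mul_pos (by linarith : 0 < 4 - 2 * Real.sqrt 2 - a ^ 2)
    (by nlinarith [Real.sqrt_nonneg 2] : 0 < 4 + 2 * Real.sqrt 2 - a ^ 2)]

theorem stmt12_general (c : ℝ) (hc : 0 < c) (x : ℝ → ℝ)
    (hx : ContDiffOn ℝ 2 x (Set.Ioo (-c) c))
    (hode : ∀ t ∈ Set.Ioo (-c) c,
      deriv (deriv x) t / (1 + (deriv x t) ^ 2)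
        = 1 / x t - (1 / 2) * (x t - deriv x t * t))
    (h0 : deriv x 0 = 0) (hx0pos : 0 < x 0)
    (hx0lt : x 0 < Real.sqrt (4 - 2 * Real.sqrt 2))
    (F : ℝ → ℝ)
    (hF : F = fun t =>
      (4 - x t * (x t - deriv x t * t)) * (x t - deriv x t * t) /
        (x t * (4 - x t ^ 2 - t ^ 2) * (1 + (deriv x t) ^ 2))) :
    F 0 = 1 ∧ deriv F 0 = 0 ∧
    deriv (deriv F) 0 = (-(x 0 ^ 4) + 8 * x 0 ^ 2 - 8) / (2 * x 0 ^ 2) ∧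
    deriv (deriv F) 0 < 0 ∧
    ∃ ε : ℝ, 0 < ε ∧ ∀ t ∈ Set.Ioo (-ε) ε, F t ≤ 1 := by
  have h0c : (0 : ℝ) ∈ Set.Ioo (-c) c := ⟨neg_neg_of_pos hc, hc⟩
  obtain ⟨hdx, hdx'⟩ := eventually_and.1 (hx.eventually_differentiableAt_and_deriv isOpen_Ioo h0c)
  have hdx'' := differentiableAt_deriv_deriv_of_ode
    (eventually_of_mem (isOpen_Ioo.mem_nhds h0c) hode) hdx.self_of_nhds hdx'.self_of_nhds
    hx0pos.ne'
  have hb : deriv (deriv x) 0 = (2 - x 0 ^ 2) / (2 * x 0) := by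
    have h := hode 0 h0c
    norm_num [h0] at h
    rw [h]
    field_simp
  have ha2 : x 0 ^ 2 < 4 - 2 * Real.sqrt 2 := (Real.lt_sqrt hx0pos.le).1 hx0lt
  have ha4 : x 0 ^ 2 < 4 := by linarith [Real.sqrt_nonneg 2]
  have hK : (-(x 0 ^ 4) + 8 * x 0 ^ 2 - 8) / (2 * x 0 ^ 2) < 0 :=
    div_neg_of_neg_of_pos (neg_pow_four_add_eight_mul_sq_sub_eight_neg ha2) (by positivity)
  obtain ⟨F', hF2, hF'0⟩ := hasSecondDerivAt_gapFunction hdx hdx' hdx'' h0 hx0pos ha4 hb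
  rw [show F = gapFunction x from hF]
  have hF1 := gapFunction_zero h0 hx0pos ha4
  have hF' : deriv (gapFunction x) 0 = 0 := hF2.deriv_eq.trans hF'0
  have hF'' := hF2.deriv_deriv_eq
  have hmax : IsLocalMax (gapFunction x) 0 :=
    isLocalMax_of_deriv_deriv_neg (hF'' ▸ hK) hF' hF2.continuousAt
  obtain ⟨ε, hε, hball⟩ := Metric.eventually_nhds_iff.1 hmax
  refine ⟨hF1, hF', hF'', hF'' ▸ hK, ε, hε, fun t ht => hF1 ▸ hball ?_⟩
  rwa [Real.dist_0_eq_abs, abs_lt]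

/-- Let `x` be a positive `C²` solution on `(−c, c)` of the Gaussian
minimal-surface-of-revolution equation with `x'(0) = 0` and `0 < x 0 < √(4 − 2√2)`. Then
the gap function
`F t = (4 − x(x − x't))(x − x't) / ( x (4 − x² − t²)(1 + x'²) )`
satisfies `F 0 = 1`, `F' 0 = 0`, `F'' 0 = (−x(0)⁴ + 8x(0)² − 8)/(2x(0)²) < 0`, and hence
`F t ≤ 1` on some interval `(−ε, ε)`. -/
theorem stmt12 (c : ℝ) (hc : 0 < c) (x : ℝ → ℝ)
    (hx : ContDiffOn ℝ 2 x (Set.Ioo (-c) c))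
    (hpos : ∀ t ∈ Set.Ioo (-c) c, 0 < x t)
    (hode : ∀ t ∈ Set.Ioo (-c) c,
      deriv (deriv x) t / (1 + (deriv x t) ^ 2)
        = 1 / x t - (1 / 2) * (x t - deriv x t * t))
    (h0 : deriv x 0 = 0) (hx0pos : 0 < x 0)
    (hx0lt : x 0 < Real.sqrt (4 - 2 * Real.sqrt 2))
    (F : ℝ → ℝ)
    (hF : F = fun t =>
      (4 - x t * (x t - deriv x t * t)) * (x t - deriv x t * t) /
        (x t * (4 - x t ^ 2 - t ^ 2) * (1 + (deriv x t) ^ 2))) :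
    F 0 = 1 ∧ deriv F 0 = 0 ∧
    deriv (deriv F) 0 = (-(x 0 ^ 4) + 8 * x 0 ^ 2 - 8) / (2 * x 0 ^ 2) ∧
    deriv (deriv F) 0 < 0 ∧
    ∃ ε : ℝ, 0 < ε ∧ ∀ t ∈ Set.Ioo (-ε) ε, F t ≤ 1 :=
  stmt12_general c hc x hx hode h0 hx0pos hx0lt F hF
end
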